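/- With π_B as above and φ = −x₁ dx₁ ∧ dx₂ ∧ dx₃, the twisted Poisson equation [π_B, π_B] = 2 ∧³π̃_B(φ) holds on ℝ⁶. -/

import Mathlib

open scoped BigOperators

noncomputable section

/-- Phase space ℝ⁶ with coordinates (x₁,x₂,x₃,p₁,p₂,p₃) indexed by 0,…,5. -/
abbrev M6 := Fin 6 → ℝ

/-- Partial derivative in the `i`-th coordinate direction. -/
def pd (i : Fin 6) (F : M6 → ℝ) (m : M6) : ℝ := fderiv ℝ F m (Pi.single i 1)

/-- Kronecker delta, viewed as the components of the coordinate 1-form `dx_a`. -/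
def dd (a i : Fin 6) : ℝ := if a = i then 1 else 0

/-- Components of `dx_a ∧ dx_b` (equivalently of `∂_a ∧ ∂_b`). -/
def w2 (a b i j : Fin 6) : ℝ := dd a i * dd b j - dd a j * dd b i

/-- Components of `dx_a ∧ dx_b ∧ dx_c` (equivalently of `∂_a ∧ ∂_b ∧ ∂_c`). -/
def w3 (a b c i j k : Fin 6) : ℝ :=
  dd a i * (dd b j * dd c k - dd b k * dd c j)
    - dd a j * (dd b i * dd c k - dd b k * dd c i)
    + dd a k * (dd b i * dd c j - dd b j * dd c i)

/-- Components of the 2-form ω_B = Σᵢ dxᵢ∧dpᵢ + x₂² dx₂∧dx₃ + x₁x₂ dx₁∧dx₃. -/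
def ωB (m : M6) (i j : Fin 6) : ℝ :=
  w2 0 3 i j + w2 1 4 i j + w2 2 5 i j
    + (m 1) ^ 2 * w2 1 2 i j + m 0 * m 1 * w2 0 2 i j

/-- Components of the bivector π_B = Σᵢ ∂xᵢ∧∂pᵢ + x₂² ∂p₂∧∂p₃ + x₁x₂ ∂p₁∧∂p₃. -/
def πB (m : M6) (i j : Fin 6) : ℝ :=
  w2 0 3 i j + w2 1 4 i j + w2 2 5 i j
    + (m 1) ^ 2 * w2 4 5 i j + m 0 * m 1 * w2 3 5 i j

/-- Components of the Schouten–Nijenhuis bracket `[π,π]` of a bivector field. -/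
def sch (π : M6 → Fin 6 → Fin 6 → ℝ) (m : M6) (i j k : Fin 6) : ℝ :=
  2 * ∑ l, (π m i l * pd l (fun x => π x j k) m
      + π m j l * pd l (fun x => π x k i) m
      + π m k l * pd l (fun x => π x i j) m)

/-- The background 3-form φ = −x₁ dx₁∧dx₂∧dx₃ on ℝ⁶. -/
def φB (m : M6) (i j k : Fin 6) : ℝ := -(m 0) * w3 0 1 2 i j k

/-- Components of the 3-vector `∧³π̃(φ)` obtained by applying `π̃` to each slot of φ. -/
def triple (π : M6 → Fin 6 → Fin 6 → ℝ) (φ : M6 → Fin 6 → Fin 6 → Fin 6 → ℝ)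
    (m : M6) (i j k : Fin 6) : ℝ :=
  ∑ a, ∑ b, ∑ c, φ m a b c * π m i a * π m j b * π m k c

/-!
The only non-constant components of π_B are π^{p₂p₃} = x₂² and π^{p₁p₃} = x₁x₂, and they depend
only on x₁, x₂, while π_B sends dxₐ to −∂pₐ. Hence π^{il} ∂_l π^{jk} only sees the columns l = x₁, x₂,
and the cyclic sum [π_B, π_B] collapses to 2x₁ ∂p₁∧∂p₂∧∂p₃. On the other side,
∧³π̃_B(−x₁ dx₁∧dx₂∧dx₃) = −x₁ (−∂p₁)∧(−∂p₂)∧(−∂p₃) = x₁ ∂p₁∧∂p₂∧∂p₃.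
-/

lemma sum_mul_dd_mul_add (f : Fin 6 → ℝ) (a b : Fin 6) (c d : ℝ) :
    ∑ l, f l * (dd a l * c + dd b l * d) = f a * c + f b * d := by
  simp [dd, mul_add, Finset.sum_add_distrib]

lemma w3_eq_cyclic (a b c i j k : Fin 6) :
    w3 a b c i j k = dd a i * w2 b c j k + dd a j * w2 b c k i + dd a k * w2 b c i j := by
  simp only [w3, w2]; ring

lemma w3_self_left (a c i j k : Fin 6) : w3 a a c i j k = 0 := by
  simp only [w3]; ring

lemma w3_swap_left (a b c i j k : Fin 6) : w3 b a c i j k = -w3 a b c i j k := by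
  simp only [w3]; ring

lemma πB_apply_zero (m : M6) (i : Fin 6) : πB m i 0 = -dd 3 i := by
  fin_cases i <;> simp [πB, w2, dd]

lemma πB_apply_one (m : M6) (i : Fin 6) : πB m i 1 = -dd 4 i := by
  fin_cases i <;> simp [πB, w2, dd]

lemma πB_apply_two (m : M6) (i : Fin 6) : πB m i 2 = -dd 5 i := by
  fin_cases i <;> simp [πB, w2, dd]

lemma pd_πB (l j k : Fin 6) (m : M6) :
    pd l (fun x => πB x j k) m =
      dd 0 l * (m 1 * w2 3 5 j k) + dd 1 l * (2 * m 1 * w2 4 5 j k + m 0 * w2 3 5 j k) := by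
  have hx (a : Fin 6) : HasFDerivAt (fun x : M6 => x a)
      (ContinuousLinearMap.proj (R := ℝ) (φ := fun _ : Fin 6 => ℝ) a) m :=
    hasFDerivAt_apply a m
  have H : HasFDerivAt (fun x => πB x j k) _ m :=
    ((((hx 1).pow 2).mul_const (w2 4 5 j k)).const_add (w2 0 3 j k + w2 1 4 j k + w2 2 5 j k)).add
      (((hx 0).mul (hx 1)).mul_const (w2 3 5 j k))
  rw [pd, H.fderiv]
  simp only [add_apply, smul_apply, ContinuousLinearMap.proj_apply, Pi.single_apply, dd]
  ring

lemma sum_πB_mul_pd_πB (m : M6) (i j k : Fin 6) :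
    ∑ l, πB m i l * pd l (fun x => πB x j k) m =
      -(m 1 * (dd 3 i * w2 3 5 j k) + 2 * m 1 * (dd 4 i * w2 4 5 j k)
        + m 0 * (dd 4 i * w2 3 5 j k)) := by
  rw [Finset.sum_congr rfl fun l _ => by rw [pd_πB], sum_mul_dd_mul_add, πB_apply_zero,
    πB_apply_one]
  ring

lemma sch_πB (m : M6) (i j k : Fin 6) : sch πB m i j k = 2 * (m 0 * w3 3 4 5 i j k) := by
  rw [sch, Finset.sum_add_distrib, Finset.sum_add_distrib, sum_πB_mul_pd_πB, sum_πB_mul_pd_πB,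
    sum_πB_mul_pd_πB]
  have h₃ := w3_self_left 3 5 i j k
  have h₄ := w3_self_left 4 5 i j k
  have h₃₄ := w3_swap_left 3 4 5 i j k
  rw [w3_eq_cyclic] at h₃ h₄ h₃₄
  -- the x₂-terms assemble into ∂p₁∧∂p₁∧∂p₃ and ∂p₂∧∂p₂∧∂p₃, which vanish
  linear_combination (-2 * m 1) * h₃ - 4 * m 1 * h₄ - 2 * m 0 * h₃₄

lemma triple_mul_w3 (π : M6 → Fin 6 → Fin 6 → ℝ) (f : M6 → ℝ) (p q r : Fin 6) (m : M6)
    (i j k : Fin 6) :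
    triple π (fun m a b c => f m * w3 p q r a b c) m i j k =
      f m * (π m i p * (π m j q * π m k r - π m j r * π m k q)
        - π m i q * (π m j p * π m k r - π m j r * π m k p)
        + π m i r * (π m j p * π m k q - π m j q * π m k p)) := by
  simp only [triple, mul_assoc, ← Finset.mul_sum]
  congr 1
  simp only [w3, sub_mul, add_mul, mul_assoc, Finset.sum_add_distrib, Finset.sum_sub_distrib]
  simp [dd]
  ring

lemma triple_πB_φB (m : M6) (i j k : Fin 6) : triple πB φB m i j k = m 0 * w3 3 4 5 i j k := by
  rw [show φB = fun m a b c => -m 0 * w3 0 1 2 a b c from rfl, triple_mul_w3]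
  simp only [πB_apply_zero, πB_apply_one, πB_apply_two, w3]
  ring

/-- The twisted Poisson equation `[π_B,π_B] = 2 ∧³π̃_B(φ)` holds on ℝ⁶. -/
theorem piB_twisted_poisson :
    ∀ m : M6, ∀ i j k, sch πB m i j k = 2 * triple πB φB m i j k := by
  intro m i j k
  rw [sch_πB, triple_πB_φB]

end
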